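/- arXiv:math/0701010 — 2 statements merged into one kernel-verified Lean document; each statement's English description precedes it below -/
import Mathlib

section
/- Let H be a Hopf algebra over a commutative ring k with antipode S, let A be a commutative k-algebra, and let δ : A → A be a derivation (δ(ab) = a δ(b) + δ(a) b). For an algebra homomorphism φ : H → A, define the logarithmic derivative D_δ(φ) := (φ ∘ S) ⋆ (δ ∘ φ), where ⋆ is convolution. Then D_δ(φ) is an A-valued infinitesimal character of H: D_δ(φ)(cd) = ε_A(c) · D_δ(φ)(d) + ε_A(d) · D_δ(φ)(c) for all c, d ∈ H. (Connes–Marcolli logarithmic derivative.) -/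
open TensorProduct

variable {k H A : Type*} [CommSemiring k] [Semiring H] [HopfAlgebra k H]
  [CommSemiring A] [Algebra k A]

/-- Convolution product of linear maps from a coalgebra `H` to an algebra `A`:
`f ⋆ g := m_A ∘ (f ⊗ g) ∘ Δ`. -/
noncomputable def conv (f g : H →ₗ[k] A) : H →ₗ[k] A :=
  LinearMap.mul' k A ∘ₗ TensorProduct.map f g ∘ₗ Coalgebra.comul

/-- The counit of `H` viewed as an `A`-valued map: `ε_A := u_A ∘ ε`. -/
noncomputable def epsA : H →ₗ[k] A :=
  Algebra.linearMap k A ∘ₗ Coalgebra.counit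

/-! Since `Δ(cd) = Δc · Δd` and `φ ∘ S` is multiplicative (`S` is an antihomomorphism and `A` is
commutative), expanding `D_δ(φ)(cd)` with the Leibniz rule for `δ ∘ φ` splits it into
`((φ ∘ S) ⋆ φ)(c) · D_δ(φ)(d) + D_δ(φ)(c) · ((φ ∘ S) ⋆ φ)(d)`, and `(φ ∘ S) ⋆ φ = φ ∘ (S ⋆ id)`
is the convolution unit `ε_A`. -/

open Coalgebra WithConv

lemma conv_eq_ofConv_mul (f g : H →ₗ[k] A) : conv f g = (toConv f * toConv g).ofConv := rfl

lemma conv_apply_eq_sum {ι : Type*} (f g : H →ₗ[k] A) {x : H} (r : Repr k x ι) :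
    conv f g x = ∑ i ∈ r.index, f (r.left i) * g (r.right i) := by
  rw [conv_eq_ofConv_mul]
  exact r.convMul_apply (toConv f) (toConv g)

lemma conv_apply_mul_of_map_mul_of_leibniz {f g u v : H →ₗ[k] A}
    (hf : ∀ x y, f (x * y) = f x * f y) (hg : ∀ x y, g (x * y) = u x * g y + g x * v y)
    (c d : H) :
    conv f g (c * d) = conv f u c * conv f g d + conv f g c * conv f v d := by
  let rc := ℛ k c
  let rd := ℛ k d
  simp only [conv_apply_eq_sum _ _ (rc.mul rd), conv_apply_eq_sum _ _ rc,
    conv_apply_eq_sum _ _ rd, Repr.mul_index, Repr.mul_left, Repr.mul_right,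
    Finset.sum_product, Finset.sum_mul_sum, ← Finset.sum_add_distrib, hf, hg]
  refine Finset.sum_congr rfl fun i _ => Finset.sum_congr rfl fun j _ => ?_
  ring

lemma AlgHom.map_antipode_mul (φ : H →ₐ[k] A) (x y : H) :
    φ (HopfAlgebra.antipode k (x * y)) =
      φ (HopfAlgebra.antipode k x) * φ (HopfAlgebra.antipode k y) := by
  rw [HopfAlgebra.antipode_mul_antidistrib, map_mul, mul_comm]

lemma conv_comp_antipode_self_eq_epsA (φ : H →ₐ[k] A) :
    conv (φ.toLinearMap ∘ₗ HopfAlgebra.antipode k) φ.toLinearMap = epsA := by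
  have h := LinearMap.algHom_comp_convMul_distrib φ (toConv (HopfAlgebra.antipode k))
    (toConv LinearMap.id)
  rw [LinearMap.antipode_mul_id, ofConv_toConv, ofConv_toConv, LinearMap.comp_id] at h
  rw [conv_eq_ofConv_mul, ← h]
  ext x
  simp [epsA]

/-- **Connes–Marcolli logarithmic derivative.** Let `H` be a Hopf algebra with antipode `S`,
`A` a commutative algebra, `δ : A → A` a derivation and `φ : H → A` an algebra homomorphism.
Then the logarithmic derivative `D_δ(φ) := (φ ∘ S) ⋆ (δ ∘ φ)` is an `A`-valued
infinitesimal character of `H`. -/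
theorem logarithmic_derivative_infinitesimal_character
    (δ : A →ₗ[k] A) (hδ : ∀ a b : A, δ (a * b) = a * δ b + δ a * b)
    (φ : H →ₐ[k] A) :
    ∀ c d : H,
      conv (φ.toLinearMap ∘ₗ HopfAlgebra.antipode (R := k)) (δ ∘ₗ φ.toLinearMap) (c * d) =
        epsA (k := k) c *
            conv (φ.toLinearMap ∘ₗ HopfAlgebra.antipode (R := k)) (δ ∘ₗ φ.toLinearMap) d +
          epsA (k := k) d *
            conv (φ.toLinearMap ∘ₗ HopfAlgebra.antipode (R := k)) (δ ∘ₗ φ.toLinearMap) c := by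
  intro c d
  have hleibniz : ∀ x y, (δ ∘ₗ φ.toLinearMap) (x * y) =
      φ.toLinearMap x * (δ ∘ₗ φ.toLinearMap) y + (δ ∘ₗ φ.toLinearMap) x * φ.toLinearMap y :=
    fun x y => by simp [hδ]
  rw [conv_apply_mul_of_map_mul_of_leibniz (φ.map_antipode_mul) hleibniz,
    conv_comp_antipode_self_eq_epsA, mul_comm (conv _ _ c)]
end

section
/- Let A be an associative unital algebra over a field of characteristic zero (e.g. a ℚ-algebra), θ a scalar, and R : A → A a Rota–Baxter operator of weight θ. Fix x ∈ A. Define the Rota–Baxter words by (Rx)^{[0]} := 1 and (Rx)^{[m+1]} := R( x · (Rx)^{[m]} ), and define C_k := R( x ·_R ( x ·_R ( ⋯ ( x ·_R x ) ⋯ ) ) ) with k factors x and right-nested pre-Lie products a ·_R b := aR(b) − R(b)a + θba (so C₁ = R(x)). Then for every n ≥ 1: (Rx)^{[n]} = Σ over all compositions (k₁, …, k_l) of n of C_{k₁} C_{k₂} ⋯ C_{k_l} / ( k_l · (k_{l−1} + k_l) · ⋯ · (k₁ + k₂ + ⋯ + k_l) ), i.e. the ordered product of the C_{k_i} divided by the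 product over i of the suffix sums k_i + k_{i+1} + ⋯ + k_l. In particular 2!(Rx)^{[2]} = C₁² + C₂ and 3!(Rx)^{[3]} = C₁³ + 2C₂C₁ + C₁C₂ + 2C₃. -/
/-!
Writing `W n := (Rx)^{[n]}` and `P k` for the `(k+1)`-fold pre-Lie power of `x`, the
Rota–Baxter identity applied to `R(P k) · R(x W m)` gives
`C_{k+1} W_{m+1} = R(x C_{k+1} W_m) + R(P k W_{m+1}) − R(P (k+1) W_m)`.
Summing over `k + m = n` the last two terms telescope, which yields the recursion
`(n+1) W_{n+1} = ∑_{k ≤ n} C_{k+1} W_{n−k}`. Unfolding it peels off the first block of a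
composition and divides by the current total `n + 1`, which is the first suffix sum.
-/

variable {K A : Type*} [Field K] [CharZero K] [Ring A] [Algebra K A]

/-- The pre-Lie product associated to a Rota–Baxter operator:
`a ·_R b := aR(b) − R(b)a + θba`. -/
def preLieRB (R : A →ₗ[K] A) (θ : K) (a b : A) : A :=
  a * R b - R b * a + θ • (b * a)

/-- Rota–Baxter words: `(Rx)^{[0]} := 1`, `(Rx)^{[m+1]} := R(x·(Rx)^{[m]})`. -/
def rbWord (R : A →ₗ[K] A) (x : A) : ℕ → A
  | 0 => 1
  | m + 1 => R (x * rbWord R x m)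

/-- Right-nested pre-Lie powers of `x`: `preLiePow 0 = x`,
`preLiePow (m+1) = x ·_R preLiePow m`. -/
def preLiePow (R : A →ₗ[K] A) (θ : K) (x : A) : ℕ → A
  | 0 => x
  | m + 1 => preLieRB R θ x (preLiePow R θ x m)

/-- `C_k := R(x ·_R (x ·_R ⋯ (x ·_R x)⋯))` with `k` factors `x`, so `C₁ = R(x)`. -/
def CLam (R : A →ₗ[K] A) (θ : K) (x : A) (k : ℕ) : A :=
  R (preLiePow R θ x (k - 1))

/-- The denominator `k_l·(k_{l−1}+k_l)⋯(k₁+⋯+k_l)` (product of suffix sums) of a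
composition with blocks `[k₁, …, k_l]`. -/
def suffixDen : List ℕ → ℕ
  | [] => 1
  | a :: t => (a + t.sum) * suffixDen t

open Finset

namespace Composition

def consEquiv (n : ℕ) : (Σ k : Fin (n + 1), Composition (n - k)) ≃ Composition (n + 1) where
  toFun p :=
    { blocks := (p.1 + 1) :: p.2.blocks
      blocks_pos := by
        rintro i (_ | ⟨_, hi⟩)
        exacts [Nat.succ_pos _, p.2.blocks_pos hi]
      blocks_sum := by
        rw [List.sum_cons, p.2.blocks_sum]
        have := p.1.isLt
        omega }
  invFun c :=
    have hne : c.blocks ≠ [] := by simp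
    have hhead := c.one_le_blocks (List.head!_mem_self hne)
    have hsum : c.blocks.head! + c.blocks.tail.sum = n + 1 := by
      rw [← List.sum_cons, List.cons_head!_tail hne, c.blocks_sum]
    ⟨⟨c.blocks.head! - 1, by omega⟩,
      { blocks := c.blocks.tail
        blocks_pos := fun hi => c.blocks_pos (List.mem_of_mem_tail hi)
        blocks_sum := by simp only; omega }⟩
  left_inv _ := rfl
  right_inv c := by
    have hne : c.blocks ≠ [] := by simp
    have hhead := c.one_le_blocks (List.head!_mem_self hne)
    apply Composition.ext
    change (c.blocks.head! - 1 + 1) :: c.blocks.tail = c.blocks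
    rw [Nat.sub_add_cancel hhead, List.cons_head!_tail hne]

theorem sum_blocks_succ {M : Type*} [AddCommMonoid M] (n : ℕ) (g : List ℕ → M) :
    ∑ c : Composition (n + 1), g c.blocks
      = ∑ k ∈ range (n + 1), ∑ c : Composition (n - k), g ((k + 1) :: c.blocks) := by
  rw [← (consEquiv n).sum_comp, Fintype.sum_sigma,
    ← Fin.sum_univ_eq_sum_range (fun k => ∑ c : Composition (n - k), g ((k + 1) :: c.blocks))]
  rfl

instance : Subsingleton (Composition 0) :=
  ⟨fun c d => Composition.ext (by rw [c.blocks_eq_nil.2 rfl, d.blocks_eq_nil.2 rfl])⟩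

theorem sum_blocks_zero {M : Type*} [AddCommMonoid M] (g : List ℕ → M) :
    ∑ c : Composition 0, g c.blocks = g [] :=
  Fintype.sum_subsingleton _ (ones 0)

end Composition

theorem suffixDen_cons_blocks {n k : ℕ} (hk : k ≤ n) (c : Composition (n - k)) :
    suffixDen ((k + 1) :: c.blocks) = (n + 1) * suffixDen c.blocks := by
  rw [suffixDen, c.blocks_sum]
  congr 1
  omega

theorem eq_sum_compositions_of_succ_nsmul {S : Type*} [Semiring S] [Algebra K S]
    (C w : ℕ → S) (h0 : w 0 = 1)
    (hrec : ∀ n : ℕ, (n + 1) • w (n + 1) = ∑ k ∈ range (n + 1), C (k + 1) * w (n - k))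
    (n : ℕ) :
    w n = ∑ c : Composition n, ((suffixDen c.blocks : K))⁻¹ • (c.blocks.map C).prod := by
  induction n using Nat.strong_induction_on with
  | _ n ih =>
    rcases n with _ | n
    · rw [Composition.sum_blocks_zero (fun l => ((suffixDen l : K))⁻¹ • (l.map C).prod), h0]
      simp [suffixDen]
    have hn : ((n + 1 : ℕ) : K) ≠ 0 := Nat.cast_ne_zero.2 n.succ_ne_zero
    calc w (n + 1) = ((n + 1 : ℕ) : K)⁻¹ • ((n + 1) • w (n + 1)) := by
          rw [← Nat.cast_smul_eq_nsmul K, inv_smul_smul₀ hn]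
      _ = ∑ k ∈ range (n + 1), ∑ c : Composition (n - k),
            ((n + 1 : ℕ) : K)⁻¹ • (C (k + 1) *
              (((suffixDen c.blocks : K))⁻¹ • (c.blocks.map C).prod)) := by
          rw [hrec, smul_sum]
          refine sum_congr rfl fun k hk => ?_
          rw [ih (n - k) (by omega), mul_sum, smul_sum]
      _ = _ := by
          rw [Composition.sum_blocks_succ n (fun l => ((suffixDen l : K))⁻¹ • (l.map C).prod)]
          refine sum_congr rfl fun k hk => sum_congr rfl fun c _ => ?_
          have hk : k ≤ n := Nat.lt_succ_iff.1 (mem_range.1 hk)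
          rw [List.map_cons, List.prod_cons, suffixDen_cons_blocks hk, Nat.cast_mul, mul_inv,
            mul_smul, mul_smul_comm]

section RotaBaxter

variable {F B : Type*} [Field F] [Ring B] [Algebra F B]

theorem CLam_succ (θ : F) (R : B →ₗ[F] B) (x : B) (k : ℕ) :
    CLam R θ x (k + 1) = R (preLiePow R θ x k) := rfl

theorem rbWord_one (θ : F) (R : B →ₗ[F] B) (x : B) : rbWord R x 1 = CLam R θ x 1 := by
  simp [rbWord, CLam, preLiePow]

def IsRotaBaxter (θ : F) (R : B →ₗ[F] B) : Prop :=
  ∀ a b : B, R a * R b = R (R a * b) + R (a * R b) - θ • R (a * b)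

namespace IsRotaBaxter

variable {θ : F} {R : B →ₗ[F] B}

theorem map_mul_map_mul (hR : IsRotaBaxter θ R) (a x w : B) :
    R a * R (x * w)
      = R (x * (R a * w)) + R (a * R (x * w)) - R (preLieRB R θ x a * w) := by
  have hcomm : R a * (x * w) = x * (R a * w) - preLieRB R θ x a * w + θ • (a * (x * w)) := by
    simp only [preLieRB, sub_mul, add_mul, smul_mul_assoc, mul_assoc]
    abel
  rw [hR, hcomm, map_add, map_sub, map_smul]
  abel

theorem succ_nsmul_rbWord_succ (hR : IsRotaBaxter θ R) (x : B) (n : ℕ) :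
    (n + 1) • rbWord R x (n + 1)
      = ∑ k ∈ range (n + 1), CLam R θ x (k + 1) * rbWord R x (n - k) := by
  induction n with
  | zero => simp [rbWord, CLam, preLiePow]
  | succ n ih =>
    set T : ℕ → B := fun k => R (preLiePow R θ x k * rbWord R x (n + 1 - k))
    have hterm : ∀ k ∈ range (n + 1), CLam R θ x (k + 1) * rbWord R x (n + 1 - k)
        = R (x * (CLam R θ x (k + 1) * rbWord R x (n - k))) + (T k - T (k + 1)) := by
      intro k hmem
      have hk : n + 1 - k = n - k + 1 := by simp at hmem; omega
      simp only [T, hk, Nat.reduceSubDiff]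
      rw [CLam_succ, rbWord, hR.map_mul_map_mul, add_sub_assoc]
      rfl
    have htelescope :
        ∑ k ∈ range (n + 1), (T k - T (k + 1)) = rbWord R x (n + 2) - CLam R θ x (n + 2) := by
      rw [sum_range_sub']
      simp [T, rbWord, preLiePow, CLam]
    rw [sum_range_succ, sum_congr rfl hterm, sum_add_distrib, ← map_sum, ← mul_sum, ← ih,
      htelescope, mul_smul_comm, map_nsmul, ← rbWord.eq_2, Nat.sub_self, rbWord.eq_1, mul_one,
      succ_nsmul _ (n + 1)]
    abel

end IsRotaBaxter

end RotaBaxter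

/-- **Lam's formula.** For a Rota–Baxter operator `R` of weight `θ` over a field of
characteristic zero and any `n ≥ 1`, the Rota–Baxter word `(Rx)^{[n]}` equals the sum
over all compositions `(k₁,…,k_l)` of `n` of
`C_{k₁}⋯C_{k_l} / (k_l(k_{l−1}+k_l)⋯(k₁+⋯+k_l))`. In particular
`2!(Rx)^{[2]} = C₁² + C₂` and `3!(Rx)^{[3]} = C₁³ + 2C₂C₁ + C₁C₂ + 2C₃`. -/
theorem lam_rota_baxter_word_formula (θ : K) (R : A →ₗ[K] A)
    (hR : ∀ a b : A, R a * R b = R (R a * b) + R (a * R b) - θ • R (a * b)) (x : A) :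
    (∀ n : ℕ, 1 ≤ n → rbWord R x n =
      ∑ c : Composition n,
        ((suffixDen c.blocks : K))⁻¹ • (c.blocks.map (CLam R θ x)).prod) ∧
    Nat.factorial 2 • rbWord R x 2 = CLam R θ x 1 ^ 2 + CLam R θ x 2 ∧
    Nat.factorial 3 • rbWord R x 3 =
      CLam R θ x 1 ^ 3 + 2 • (CLam R θ x 2 * CLam R θ x 1) + CLam R θ x 1 * CLam R θ x 2 +
        2 • CLam R θ x 3 := by
  have hrec := IsRotaBaxter.succ_nsmul_rbWord_succ (θ := θ) hR x
  have h2 : 2 • rbWord R x 2 = CLam R θ x 1 ^ 2 + CLam R θ x 2 := by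
    simpa [sum_range_succ, rbWord_one θ, rbWord, sq] using hrec 1
  have h3 : 3 • rbWord R x 3
      = CLam R θ x 1 * rbWord R x 2 + CLam R θ x 2 * CLam R θ x 1 + CLam R θ x 3 := by
    simpa [sum_range_succ, rbWord_one θ, rbWord.eq_1] using hrec 2
  refine ⟨fun n _ => eq_sum_compositions_of_succ_nsmul _ _ rfl hrec n, h2, ?_⟩
  calc Nat.factorial 3 • rbWord R x 3 = 2 • (3 • rbWord R x 3) := by rw [← mul_nsmul']; rfl
    _ = _ := by rw [h3, smul_add, smul_add, ← mul_smul_comm, h2, mul_add, ← pow_succ']; abel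
end
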